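/- A 2×2 block operator matrix [[a, b*], [b, c]] acting on H ⊕ K (with a ∈ B(H), c ∈ B(K) positive, b ∈ B(H,K)) is positive if and only if there exists a contraction v ∈ B(H, K) with b = c^{1/2} v a^{1/2}. -/

import Mathlib

noncomputable section

variable (E F : Type*)
  [NormedAddCommGroup E] [InnerProductSpace ℂ E] [CompleteSpace E]
  [NormedAddCommGroup F] [InnerProductSpace ℂ F] [CompleteSpace F]

def fstW : WithLp 2 (E × F) →L[ℂ] E :=
  (ContinuousLinearMap.fst ℂ E F).comp
    (WithLp.prodContinuousLinearEquiv 2 ℂ E F).toContinuousLinearMap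

def sndW : WithLp 2 (E × F) →L[ℂ] F :=
  (ContinuousLinearMap.snd ℂ E F).comp
    (WithLp.prodContinuousLinearEquiv 2 ℂ E F).toContinuousLinearMap

def inlW : E →L[ℂ] WithLp 2 (E × F) :=
  ((WithLp.prodContinuousLinearEquiv 2 ℂ E F).symm.toContinuousLinearMap).comp
    (ContinuousLinearMap.inl ℂ E F)

def inrW : F →L[ℂ] WithLp 2 (E × F) :=
  ((WithLp.prodContinuousLinearEquiv 2 ℂ E F).symm.toContinuousLinearMap).comp
    (ContinuousLinearMap.inr ℂ E F)

/-- The `2 × 2` block operator `[[a, b'], [b, c]]` on the Hilbert direct sum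
`H ⊕ K` (top-left `a : H → H`, top-right `b' : K → H`, bottom-left
`b : H → K`, bottom-right `c : K → K`). -/
def blockW (a : E →L[ℂ] E) (b' : F →L[ℂ] E) (b : E →L[ℂ] F) (c : F →L[ℂ] F) :
    WithLp 2 (E × F) →L[ℂ] WithLp 2 (E × F) :=
  (inlW E F) ∘L a ∘L (fstW E F) + (inlW E F) ∘L b' ∘L (sndW E F) +
    (inrW E F) ∘L b ∘L (fstW E F) + (inrW E F) ∘L c ∘L (sndW E F)

/-!
Write `a = s† s` and `c = t† t`. Positivity of the block operator is the inequality
`0 ≤ ‖s ξ‖² + 2 re ⟪η, b ξ⟫ + ‖t η‖²`, which, after rescaling `η` by a scalar, is equivalent to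
the Cauchy–Schwarz type bound `‖⟪η, b ξ⟫‖ ≤ ‖s ξ‖ ‖t η‖`. This bound is exactly what a
factorization `b = t† v s` with `‖v‖ ≤ 1` yields. Conversely, Douglas' lemma (`‖f ξ‖ ≤ C ‖d ξ‖`
makes `f = u d` with `‖u‖ ≤ C`) applied first to `b` and `s`, then to the adjoint of the
resulting factor and `t`, produces the contraction `v`.
-/

open scoped InnerProductSpace InnerProduct ComplexConjugate
open ContinuousLinearMap RCLike

section Douglas

variable {𝕜 X Y Z : Type*} [RCLike 𝕜] [NormedAddCommGroup X] [NormedSpace 𝕜 X]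
  [NormedAddCommGroup Y] [NormedSpace 𝕜 Y] [CompleteSpace Y]
  [NormedAddCommGroup Z] [InnerProductSpace 𝕜 Z] [CompleteSpace Z]

theorem ContinuousLinearMap.exists_factor_of_norm_le {f : X →L[𝕜] Y} {d : X →L[𝕜] Z} {C : ℝ}
    (hC : 0 ≤ C) (h : ∀ x, ‖f x‖ ≤ C * ‖d x‖) :
    ∃ u : Z →L[𝕜] Y, ‖u‖ ≤ C ∧ (∀ x, u (d x) = f x) ∧
      ∀ z ∈ (LinearMap.range (d : X →ₗ[𝕜] Z))ᗮ, u z = 0 := by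
  set D := (LinearMap.range (d : X →ₗ[𝕜] Z)).topologicalClosure
  let d' : X →ₗ[𝕜] D := (d : X →ₗ[𝕜] Z).codRestrict D fun x ↦
    Submodule.le_topologicalClosure _ (LinearMap.mem_range_self (d : X →ₗ[𝕜] Z) x)
  have hdense : DenseRange d' := by
    rw [DenseRange, Subtype.dense_iff, ← Set.range_comp]
    exact (Submodule.topologicalClosure_coe _).subset
  let u₀ : D →L[𝕜] Y := (f : X →ₗ[𝕜] Y).extendOfNorm d'
  refine ⟨u₀ ∘L D.orthogonalProjectionOnto, ?_, fun x ↦ ?_, fun z hz ↦ ?_⟩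
  · calc _ ≤ ‖u₀‖ * ‖D.orthogonalProjectionOnto‖ := opNorm_comp_le _ _
      _ ≤ C * 1 := by
        gcongr
        · exact LinearMap.opNorm_extendOfNorm_le hdense hC h
        · exact Submodule.orthogonalProjectionOnto_norm_le D
      _ = C := mul_one C
  · have : D.orthogonalProjectionOnto (d x) = d' x :=
      Submodule.orthogonalProjectionOnto_mem_subspace_eq_self (d' x)
    rw [comp_apply, this]
    exact LinearMap.extendOfNorm_eq hdense ⟨C, h⟩ x
  · rw [← Submodule.orthogonal_closure] at hz
    rw [comp_apply, Submodule.orthogonalProjectionOnto_apply_of_mem_orthogonal hz, map_zero]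

end Douglas

theorem le_of_sq_le_mul {x A : ℝ} (hA : 0 ≤ A) (h : x ^ 2 ≤ A * x) : x ≤ A := by
  nlinarith

section Factorization

variable {𝕜 X Y Z W : Type*} [RCLike 𝕜]
  [NormedAddCommGroup X] [InnerProductSpace 𝕜 X]
  [NormedAddCommGroup Y] [InnerProductSpace 𝕜 Y] [CompleteSpace Y]
  [NormedAddCommGroup Z] [InnerProductSpace 𝕜 Z] [CompleteSpace Z]
  [NormedAddCommGroup W] [InnerProductSpace 𝕜 W] [CompleteSpace W]

theorem norm_le_of_mem_topologicalClosure_of_norm_inner_le {S : Submodule 𝕜 X} {m : X}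
    (hm : m ∈ S.topologicalClosure) {C : ℝ} (hC : 0 ≤ C) (h : ∀ z ∈ S, ‖⟪m, z⟫_𝕜‖ ≤ C * ‖z‖) :
    ‖m‖ ≤ C := by
  have hclosed : IsClosed {z : X | ‖⟪m, z⟫_𝕜‖ ≤ C * ‖z‖} :=
    isClosed_le (by fun_prop) (by fun_prop)
  have hmm : ‖⟪m, m⟫_𝕜‖ ≤ C * ‖m‖ :=
    closure_minimal (s := (S : Set X)) h hclosed (by rwa [← Submodule.topologicalClosure_coe])
  rw [inner_self_eq_norm_sq_to_K, norm_pow, RCLike.norm_ofReal, abs_norm] at hmm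
  exact le_of_sq_le_mul hC hmm

theorem norm_inner_le_iff_exists_contraction (b : X →L[𝕜] Y) (s : X →L[𝕜] Z) (t : Y →L[𝕜] W) :
    (∀ ξ η, ‖⟪η, b ξ⟫_𝕜‖ ≤ ‖s ξ‖ * ‖t η‖) ↔ ∃ v : Z →L[𝕜] W, ‖v‖ ≤ 1 ∧ b = t† ∘L v ∘L s := by
  constructor
  · intro h
    have hb : ∀ ξ, ‖b ξ‖ ≤ ‖t‖ * ‖s ξ‖ := fun ξ ↦ by
      have := h ξ (b ξ)
      rw [inner_self_eq_norm_sq_to_K, norm_pow, RCLike.norm_ofReal, abs_norm] at this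
      refine le_of_sq_le_mul (by positivity) (this.trans ?_)
      calc ‖s ξ‖ * ‖t (b ξ)‖ ≤ ‖s ξ‖ * (‖t‖ * ‖b ξ‖) := by gcongr; exact t.le_opNorm _
        _ = ‖t‖ * ‖s ξ‖ * ‖b ξ‖ := by ring
    obtain ⟨w, -, hws, hw⟩ := exists_factor_of_norm_le (norm_nonneg t) hb
    -- `w` vanishes on `(range s)ᗮ`, so `w† η` lies in the closure of `range s`.
    have hwt : ∀ η, ‖(w†) η‖ ≤ 1 * ‖t η‖ := fun η ↦ by
      rw [one_mul]
      refine norm_le_of_mem_topologicalClosure_of_norm_inner_le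
        (S := LinearMap.range (s : X →ₗ[𝕜] Z)) ?_ (norm_nonneg _) ?_
      · rw [← Submodule.orthogonal_orthogonal_eq_closure, Submodule.mem_orthogonal]
        intro z hz
        rw [adjoint_inner_right, hw z hz, inner_zero_left]
      · rintro _ ⟨ξ, rfl⟩
        rw [ContinuousLinearMap.coe_coe, adjoint_inner_left, hws, mul_comm]
        exact h ξ η
    obtain ⟨u, hu, hut, -⟩ := exists_factor_of_norm_le zero_le_one hwt
    have hw_eq : w = t† ∘L u† := by
      rw [← adjoint_comp, ← adjoint_adjoint w]
      congr 1
      ext η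
      exact (hut η).symm
    refine ⟨u†, by rwa [LinearIsometryEquiv.norm_map], ?_⟩
    ext ξ
    simpa [hw_eq] using (hws ξ).symm
  · rintro ⟨v, hv, rfl⟩ ξ η
    calc ‖⟪η, (t† ∘L v ∘L s) ξ⟫_𝕜‖ = ‖⟪t η, v (s ξ)⟫_𝕜‖ := by simp [adjoint_inner_right]
      _ ≤ ‖t η‖ * (‖v‖ * ‖s ξ‖) := (norm_inner_le_norm _ _).trans (by gcongr; exact v.le_opNorm _)
      _ ≤ ‖t η‖ * (1 * ‖s ξ‖) := by gcongr
      _ = ‖s ξ‖ * ‖t η‖ := by ring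

end Factorization

section Quadratic

variable {𝕜 X Y Z W : Type*} [RCLike 𝕜]
  [NormedAddCommGroup X] [InnerProductSpace 𝕜 X]
  [NormedAddCommGroup Y] [InnerProductSpace 𝕜 Y]
  [NormedAddCommGroup Z] [InnerProductSpace 𝕜 Z]
  [NormedAddCommGroup W] [InnerProductSpace 𝕜 W]

theorem norm_le_mul_of_forall_quadratic_nonneg {z : 𝕜} {A B : ℝ} (hA : 0 ≤ A) (hB : 0 ≤ B)
    (h : ∀ c : 𝕜, 0 ≤ A ^ 2 + 2 * re (conj c * z) + (‖c‖ * B) ^ 2) : ‖z‖ ≤ A * B := by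
  have hq : ∀ t : ℝ, 0 ≤ (‖z‖ ^ 2 * B ^ 2) * (t * t) + (-2 * ‖z‖ ^ 2) * t + A ^ 2 := fun t ↦ by
    have hre : re (conj (-(t : 𝕜) * z) * z) = -t * ‖z‖ ^ 2 := by
      rw [map_mul (starRingEnd 𝕜), map_neg, conj_ofReal, mul_assoc, RCLike.conj_mul,
        ← ofReal_pow, ← ofReal_neg, re_ofReal_mul, ofReal_re, neg_mul]
    have hnorm : ‖-(t : 𝕜) * z‖ = |t| * ‖z‖ := by rw [norm_mul, norm_neg, norm_ofReal]
    have := h (-(t : 𝕜) * z)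
    rw [hre, hnorm, mul_pow, mul_pow, sq_abs] at this
    linarith
  have hd := discrim_le_zero hq
  rw [discrim] at hd
  by_contra! hlt
  have hz : 0 < ‖z‖ := (mul_nonneg hA hB).trans_lt hlt
  have h1 : (A * B) ^ 2 < ‖z‖ ^ 2 := by gcongr
  nlinarith [mul_lt_mul_of_pos_left h1 (pow_pos hz 2)]

theorem forall_quadratic_nonneg_iff_norm_inner_le (b : X →L[𝕜] Y) (s : X →L[𝕜] Z)
    (t : Y →L[𝕜] W) :
    (∀ ξ η, 0 ≤ ‖s ξ‖ ^ 2 + 2 * re ⟪η, b ξ⟫_𝕜 + ‖t η‖ ^ 2) ↔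
      ∀ ξ η, ‖⟪η, b ξ⟫_𝕜‖ ≤ ‖s ξ‖ * ‖t η‖ := by
  refine ⟨fun h ξ η ↦ norm_le_mul_of_forall_quadratic_nonneg (norm_nonneg _) (norm_nonneg _)
    fun c ↦ ?_, fun h ξ η ↦ ?_⟩
  · simpa [inner_smul_left, norm_smul] using h ξ (c • η)
  · nlinarith [neg_le_of_abs_le (abs_re_le_norm ⟪η, b ξ⟫_𝕜), h ξ η, sq_nonneg (‖s ξ‖ - ‖t η‖)]

end Quadratic

theorem ContinuousLinearMap.IsPositive.exists_isPositive_comp_self_eq {X : Type*}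
    [NormedAddCommGroup X] [InnerProductSpace ℂ X] [CompleteSpace X] {a : X →L[ℂ] X}
    (ha : a.IsPositive) : ∃ s : X →L[ℂ] X, s.IsPositive ∧ s ∘L s = a :=
  ⟨CFC.sqrt a, (nonneg_iff_isPositive _).1 (CFC.sqrt_nonneg a),
    CFC.sqrt_mul_sqrt_self a ((nonneg_iff_isPositive a).2 ha)⟩

section Block

variable {H K : Type*} [NormedAddCommGroup H] [InnerProductSpace ℂ H]
  [NormedAddCommGroup K] [InnerProductSpace ℂ K]

theorem blockW_fst (a : H →L[ℂ] H) (b' : K →L[ℂ] H) (b : H →L[ℂ] K) (c : K →L[ℂ] K)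
    (x : WithLp 2 (H × K)) : (blockW H K a b' b c x).fst = a x.fst + b' x.snd := by
  simp [blockW, inlW, inrW, fstW, sndW]

theorem blockW_snd (a : H →L[ℂ] H) (b' : K →L[ℂ] H) (b : H →L[ℂ] K) (c : K →L[ℂ] K)
    (x : WithLp 2 (H × K)) : (blockW H K a b' b c x).snd = b x.fst + c x.snd := by
  simp [blockW, inlW, inrW, fstW, sndW]

variable [CompleteSpace H] [CompleteSpace K]

theorem isSymmetric_blockW {a : H →L[ℂ] H} {c : K →L[ℂ] K} (ha : IsSelfAdjoint a)
    (hc : IsSelfAdjoint c) (b : H →L[ℂ] K) : (blockW H K a (b†) b c).IsSymmetric := by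
  intro x y
  simp only [coe_coe, WithLp.prod_inner_apply, WithLp.ofLp_fst, WithLp.ofLp_snd, blockW_fst,
    blockW_snd, inner_add_left, inner_add_right, adjoint_inner_left, adjoint_inner_right]
  rw [← adjoint_inner_right a, ← adjoint_inner_right c, ha.adjoint_eq, hc.adjoint_eq]
  ring

theorem re_inner_blockW_self (a : H →L[ℂ] H) (b : H →L[ℂ] K) (c : K →L[ℂ] K)
    (x : WithLp 2 (H × K)) :
    re ⟪blockW H K a (b†) b c x, x⟫_ℂ =
      re ⟪a x.fst, x.fst⟫_ℂ + 2 * re ⟪x.snd, b x.fst⟫_ℂ + re ⟪c x.snd, x.snd⟫_ℂ := by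
  rw [WithLp.prod_inner_apply, WithLp.ofLp_fst, WithLp.ofLp_snd, WithLp.ofLp_fst,
    WithLp.ofLp_snd, blockW_fst, blockW_snd, inner_add_left, inner_add_left, adjoint_inner_left,
    ← inner_conj_symm (b x.fst)]
  simp only [map_add, conj_re]
  ring

theorem isPositive_blockW_iff {a : H →L[ℂ] H} {c : K →L[ℂ] K} (ha : IsSelfAdjoint a)
    (hc : IsSelfAdjoint c) (b : H →L[ℂ] K) :
    (blockW H K a (b†) b c).IsPositive ↔
      ∀ ξ η, 0 ≤ re ⟪a ξ, ξ⟫_ℂ + 2 * re ⟪η, b ξ⟫_ℂ + re ⟪c η, η⟫_ℂ := by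
  rw [isPositive_def, and_iff_right (isSymmetric_blockW ha hc b)]
  refine ⟨fun h ξ η ↦ ?_, fun h x ↦ ?_⟩
  · have := h (WithLp.toLp 2 (ξ, η))
    rwa [reApplyInnerSelf_apply, re_inner_blockW_self] at this
  · rw [reApplyInnerSelf_apply, re_inner_blockW_self]
    exact h _ _

theorem isPositive_blockW_adjoint_comp_self_iff {Z W : Type*} [NormedAddCommGroup Z]
    [InnerProductSpace ℂ Z] [CompleteSpace Z] [NormedAddCommGroup W] [InnerProductSpace ℂ W]
    [CompleteSpace W] (s : H →L[ℂ] Z) (t : K →L[ℂ] W) (b : H →L[ℂ] K) :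
    (blockW H K (s† ∘L s) (b†) b (t† ∘L t)).IsPositive ↔
      ∃ v : Z →L[ℂ] W, ‖v‖ ≤ 1 ∧ b = t† ∘L v ∘L s := by
  rw [isPositive_blockW_iff (isPositive_adjoint_comp_self s).isSelfAdjoint
    (isPositive_adjoint_comp_self t).isSelfAdjoint]
  simp only [← apply_norm_sq_eq_inner_adjoint_left]
  rw [forall_quadratic_nonneg_iff_norm_inner_le, norm_inner_le_iff_exists_contraction]

end Block

/-- A `2 × 2` block operator `[[a, b*], [b, c]]` on `H ⊕ K`
with `a ∈ B(H)`, `c ∈ B(K)` positive and `b ∈ B(H, K)` is positive if and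
only if `b = c^{1/2} v a^{1/2}` for some contraction `v ∈ B(H, K)`.
(The square roots `a^{1/2}`, `c^{1/2}` are expressed via their defining
property of being positive operators squaring to `a` resp. `c`.) -/
theorem stmt11 {H K : Type*}
    [NormedAddCommGroup H] [InnerProductSpace ℂ H] [CompleteSpace H]
    [NormedAddCommGroup K] [InnerProductSpace ℂ K] [CompleteSpace K]
    (a : H →L[ℂ] H) (b : H →L[ℂ] K) (c : K →L[ℂ] K)
    (ha : a.IsPositive) (hc : c.IsPositive) :
    (blockW H K a (ContinuousLinearMap.adjoint b) b c).IsPositive ↔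
      ∃ (sa : H →L[ℂ] H) (sc : K →L[ℂ] K) (v : H →L[ℂ] K),
        sa.IsPositive ∧ sa ∘L sa = a ∧
        sc.IsPositive ∧ sc ∘L sc = c ∧
        ‖v‖ ≤ 1 ∧ b = sc ∘L v ∘L sa := by
  have key : ∀ (sa : H →L[ℂ] H) (sc : K →L[ℂ] K), IsSelfAdjoint sa → IsSelfAdjoint sc →
      ((blockW H K (sa ∘L sa) (b†) b (sc ∘L sc)).IsPositive ↔
        ∃ v : H →L[ℂ] K, ‖v‖ ≤ 1 ∧ b = sc ∘L v ∘L sa) := fun sa sc hsa hsc ↦ by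
    simpa only [hsa.adjoint_eq, hsc.adjoint_eq] using
      isPositive_blockW_adjoint_comp_self_iff sa sc b
  constructor
  · intro hM
    obtain ⟨sa, hsa, rfl⟩ := ha.exists_isPositive_comp_self_eq
    obtain ⟨sc, hsc, rfl⟩ := hc.exists_isPositive_comp_self_eq
    obtain ⟨v, hv, hb⟩ := (key sa sc hsa.isSelfAdjoint hsc.isSelfAdjoint).1 hM
    exact ⟨sa, sc, v, hsa, rfl, hsc, rfl, hv, hb⟩
  · rintro ⟨sa, sc, v, hsa, rfl, hsc, rfl, hv, hb⟩
    exact (key sa sc hsa.isSelfAdjoint hsc.isSelfAdjoint).2 ⟨v, hv, hb⟩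

end
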